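/- Let G=(V,E) be a graph and f : V → {0,1,2} with k = ω(f). If there exists a minimal perfect Roman dominating function h on G with f ≤ h, then there exists a minimal perfect Roman dominating function g on G with f ≤ g such that |V_2(g) \ V_2(f)| ≤ |V_1(f)| and |V_2(g)| ≤ k. -/

import Mathlib

/-- A perfect Roman dominating function: every vertex with value 0 has exactly one
neighbor with value 2. -/
def IsPRDF {V : Type*} (G : SimpleGraph V) (f : V → Fin 3) : Prop :=
  ∀ v, f v = 0 → ∃! u, G.Adj v u ∧ f u = 2

/-- The weight of a function `f : V → {0,1,2}`. -/
def weight {V : Type*} [Fintype V] (f : V → Fin 3) : ℕ := ∑ v, (f v : ℕ)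


open Finset

private lemma fin3_cases (a : Fin 3) : a = 0 ∨ a = 1 ∨ a = 2 := by revert a; decide

private lemma fin3_le_zero {a : Fin 3} (h : a ≤ 0) : a = 0 := by revert h; revert a; decide

private lemma fin3_two_le {a b : Fin 3} (h : a = 2) (h2 : a ≤ b) : b = 2 := by
  revert h h2; revert a b; decide

private lemma prdf_min_two {V : Type*} {G : SimpleGraph V} {h : V → Fin 3}
    (hm : Minimal (IsPRDF G) h) {u : V} (hu : h u = 2) :
    ∃ w, G.Adj u w ∧ h w = 0 := by
  classical
  by_contra hno
  push_neg at hno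
  have hle : Function.update h u 1 ≤ h := by
    intro v
    rcases eq_or_ne v u with rfl | hne
    · rw [Function.update_self, hu]; exact (by decide : (1:Fin 3) ≤ 2)
    · rw [Function.update_of_ne hne]
  have hp : IsPRDF G (Function.update h u 1) := by
    intro v hv0
    have hvu : v ≠ u := by
      intro he; rw [he, Function.update_self] at hv0; exact absurd hv0 (by decide)
    rw [Function.update_of_ne hvu] at hv0
    obtain ⟨z, ⟨hz1, hz2⟩, hzu⟩ := hm.prop v hv0
    have hznu : z ≠ u := by
      intro he; exact hno v (G.adj_symm (he ▸ hz1)) hv0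
    refine ⟨z, ⟨hz1, by rw [Function.update_of_ne hznu]; exact hz2⟩, ?_⟩
    rintro y ⟨hy1, hy2⟩
    have hynu : y ≠ u := by
      intro he; rw [he, Function.update_self] at hy2; exact absurd hy2 (by decide)
    rw [Function.update_of_ne hynu] at hy2
    exact hzu y ⟨hy1, hy2⟩
  have h2 := hm.2 hp hle u
  rw [Function.update_self, hu] at h2
  exact absurd h2 (by decide : ¬ ((2:Fin 3) ≤ 1))

private lemma prdf_min_one {V : Type*} {G : SimpleGraph V} {h : V → Fin 3}
    (hm : Minimal (IsPRDF G) h) {v : V} (hv : h v = 1) :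
    ¬ ∃! z, G.Adj v z ∧ h z = 2 := by
  classical
  intro hex
  have hle : Function.update h v 0 ≤ h := by
    intro w
    rcases eq_or_ne w v with rfl | hne
    · rw [Function.update_self]; exact Fin.zero_le _
    · rw [Function.update_of_ne hne]
  have hp : IsPRDF G (Function.update h v 0) := by
    intro w hw0
    rcases eq_or_ne w v with rfl | hne
    · obtain ⟨z, ⟨hz1, hz2⟩, hzu⟩ := hex
      have hznv : z ≠ w := by intro he; rw [he, hv] at hz2; exact absurd hz2 (by decide)
      refine ⟨z, ⟨hz1, by rw [Function.update_of_ne hznv]; exact hz2⟩, ?_⟩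
      rintro y ⟨hy1, hy2⟩
      have hynv : y ≠ w := by
        intro he; rw [he, Function.update_self] at hy2; exact absurd hy2 (by decide)
      rw [Function.update_of_ne hynv] at hy2
      exact hzu y ⟨hy1, hy2⟩
    · rw [Function.update_of_ne hne] at hw0
      obtain ⟨z, ⟨hz1, hz2⟩, hzu⟩ := hm.prop w hw0
      have hznv : z ≠ v := by intro he; rw [he, hv] at hz2; exact absurd hz2 (by decide)
      refine ⟨z, ⟨hz1, by rw [Function.update_of_ne hznv]; exact hz2⟩, ?_⟩
      rintro y ⟨hy1, hy2⟩
      have hynv : y ≠ v := by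
        intro he; rw [he, Function.update_self] at hy2; exact absurd hy2 (by decide)
      rw [Function.update_of_ne hynv] at hy2
      exact hzu y ⟨hy1, hy2⟩
  have h2 := hm.2 hp hle v
  rw [Function.update_self, hv] at h2
  exact absurd h2 (by decide : ¬ ((1:Fin 3) ≤ 0))

lemma exists_K {V : Type*} [Fintype V] [DecidableEq V] {G : SimpleGraph V}
    [DecidableRel G.Adj] {f h : V → Fin 3}
    (hm : Minimal (IsPRDF G) h) (hfh : f ≤ h) :
    ∃ K : Finset V,
      (univ.filter (fun v => h v = 2 ∧ f v ≠ 0)) ⊆ K ∧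
      (∀ v ∈ K, h v = 2) ∧
      (K \ univ.filter (fun v => f v = 2)).card ≤ (univ.filter (fun v => f v = 1)).card ∧
      (∀ v, f v = 1 → v ∉ K → (K.filter (fun z => G.Adj v z)).card ≠ 1) := by
  classical
  set T : Finset V := univ.filter (fun v => h v = 2 ∧ f v ≠ 0) with hT
  set V2h : Finset V := univ.filter (fun v => h v = 2) with hV2h
  set C : Finset V → Finset V := fun K =>
    univ.filter (fun v => f v = 1 ∧ h v ≠ 2 ∧ 2 ≤ (K.filter (fun z => G.Adj v z)).card)
    with hC
  have hTsub : T ⊆ V2h := by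
    intro x hx
    simp only [hT, hV2h, mem_filter, mem_univ, true_and] at hx ⊢
    exact hx.1
  -- one repair step
  have step : ∀ K : Finset V, T ⊆ K → K ⊆ V2h → (K \ T).card ≤ (C K).card →
      (∃ v, f v = 1 ∧ h v ≠ 2 ∧ (K.filter (fun z => G.Adj v z)).card = 1) →
      ∃ K', T ⊆ K' ∧ K' ⊆ V2h ∧ (K' \ T).card ≤ (C K').card ∧
        (V2h \ K').card < (V2h \ K).card := by
    intro K h1 h2 h3 hviol
    obtain ⟨v, hv1, hvh, hcount⟩ := hviol
    obtain ⟨z0, hz0⟩ := Finset.card_eq_one.mp hcount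
    have hz0mem : z0 ∈ K ∧ G.Adj v z0 := by
      have : z0 ∈ K.filter (fun z => G.Adj v z) := by rw [hz0]; exact mem_singleton_self z0
      exact mem_filter.mp this
    have hz0h : h z0 = 2 := by
      have := h2 hz0mem.1
      rw [hV2h, mem_filter] at this
      exact this.2
    have hhv : h v = 1 := by
      rcases fin3_cases (h v) with h0 | h1' | h2'
      · have := hfh v; rw [hv1, h0] at this
        exact absurd this (by decide : ¬ ((1:Fin 3) ≤ 0))
      · exact h1'
      · exact absurd h2' hvh
    have hnex := prdf_min_one hm hhv
    have hz1 : ∃ z1, (G.Adj v z1 ∧ h z1 = 2) ∧ z1 ≠ z0 := by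
      by_contra hc
      push_neg at hc
      exact hnex ⟨z0, ⟨hz0mem.2, hz0h⟩, fun y hy => hc y hy⟩
    obtain ⟨z1, ⟨hadj1, hh1⟩, hne10⟩ := hz1
    have hz1K : z1 ∉ K := by
      intro hmem
      have : z1 ∈ K.filter (fun z => G.Adj v z) := mem_filter.mpr ⟨hmem, hadj1⟩
      rw [hz0] at this
      exact hne10 (mem_singleton.mp this)
    have hz1V2h : z1 ∈ V2h := by rw [hV2h, mem_filter]; exact ⟨mem_univ _, hh1⟩
    have hz1T : z1 ∉ T := fun ht => hz1K (h1 ht)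
    refine ⟨insert z1 K, h1.trans (subset_insert _ _), insert_subset hz1V2h h2, ?_, ?_⟩
    · -- cardinality invariant
      have hsd : insert z1 K \ T = insert z1 (K \ T) := by
        ext x
        simp only [mem_sdiff, mem_insert]
        constructor
        · rintro ⟨hx | hx, hxt⟩
          · exact Or.inl hx
          · exact Or.inr ⟨hx, hxt⟩
        · rintro (rfl | ⟨hxK, hxt⟩)
          · exact ⟨Or.inl rfl, hz1T⟩
          · exact ⟨Or.inr hxK, hxt⟩
      rw [hsd, card_insert_of_notMem (fun hx => hz1K (mem_sdiff.mp hx).1)]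
      have hfilt : (insert z1 K).filter (fun z => G.Adj v z)
          = insert z1 (K.filter (fun z => G.Adj v z)) := by
        rw [filter_insert, if_pos hadj1]
      have hz1f : z1 ∉ K.filter (fun z => G.Adj v z) := fun hx => hz1K (mem_filter.mp hx).1
      have hvCK' : v ∈ C (insert z1 K) := by
        simp only [hC, mem_filter, mem_univ, true_and]
        refine ⟨hv1, hvh, ?_⟩
        rw [hfilt, card_insert_of_notMem hz1f, hcount]
      have hsubC : insert v (C K) ⊆ C (insert z1 K) := by
        intro x hx
        rcases mem_insert.mp hx with rfl | hxC
        · exact hvCK'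
        · simp only [hC, mem_filter, mem_univ, true_and] at hxC ⊢
          refine ⟨hxC.1, hxC.2.1, le_trans hxC.2.2 (card_le_card ?_)⟩
          exact filter_subset_filter _ (subset_insert _ _)
      have hvC : v ∉ C K := by
        intro hx
        have := (mem_filter.mp hx).2.2.2
        rw [hcount] at this
        omega
      calc (K \ T).card + 1 ≤ (C K).card + 1 := by omega
        _ = (insert v (C K)).card := (card_insert_of_notMem hvC).symm
        _ ≤ (C (insert z1 K)).card := card_le_card hsubC
    · -- measure decreases
      have : V2h \ insert z1 K = (V2h \ K).erase z1 := by
        ext x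
        simp only [mem_sdiff, mem_insert, mem_erase]
        tauto
      rw [this]
      exact card_erase_lt_of_mem (mem_sdiff.mpr ⟨hz1V2h, hz1K⟩)
  -- main induction
  have main : ∀ m : ℕ, ∀ K : Finset V, T ⊆ K → K ⊆ V2h →
      (K \ T).card ≤ (C K).card → (V2h \ K).card ≤ m →
      ∃ K', T ⊆ K' ∧ K' ⊆ V2h ∧ (K' \ T).card ≤ (C K').card ∧
        (∀ v, f v = 1 → h v ≠ 2 → (K'.filter (fun z => G.Adj v z)).card ≠ 1) := by
    intro m
    induction m with
    | zero =>
      intro K h1 h2 h3 h4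
      by_cases hviol : ∀ v, f v = 1 → h v ≠ 2 → (K.filter (fun z => G.Adj v z)).card ≠ 1
      · exact ⟨K, h1, h2, h3, hviol⟩
      · exfalso
        push_neg at hviol
        obtain ⟨K', _, _, _, hlt⟩ := step K h1 h2 h3 hviol
        omega
    | succ m ih =>
      intro K h1 h2 h3 h4
      by_cases hviol : ∀ v, f v = 1 → h v ≠ 2 → (K.filter (fun z => G.Adj v z)).card ≠ 1
      · exact ⟨K, h1, h2, h3, hviol⟩
      · push_neg at hviol
        obtain ⟨K', hK1, hK2, hK3, hlt⟩ := step K h1 h2 h3 hviol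
        exact ih K' hK1 hK2 hK3 (by omega)
  obtain ⟨K, hK1, hK2, hK3, hK4⟩ :=
    main (V2h \ T).card T (Finset.Subset.refl T) hTsub (by simp) le_rfl
  set V2f : Finset V := univ.filter (fun v => f v = 2) with hV2f
  set V1f : Finset V := univ.filter (fun v => f v = 1) with hV1f
  have hKV2h : ∀ v ∈ K, h v = 2 := by
    intro v hv
    have := hK2 hv
    rw [hV2h, mem_filter] at this
    exact this.2
  refine ⟨K, hK1, hKV2h, ?_, ?_⟩
  · -- cardinality bound
    have hV2fT : V2f ⊆ T := by
      intro x hx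
      rw [hV2f, mem_filter] at hx
      rw [hT, mem_filter]
      exact ⟨mem_univ _, fin3_two_le hx.2 (hfh x), by rw [hx.2]; decide⟩
    have hdecomp : K \ V2f = (K \ T) ∪ (T \ V2f) := by
      ext x
      simp only [mem_sdiff, mem_union]
      constructor
      · rintro ⟨hxK, hxV⟩
        by_cases hxT : x ∈ T
        · exact Or.inr ⟨hxT, hxV⟩
        · exact Or.inl ⟨hxK, hxT⟩
      · rintro (⟨hxK, hxT⟩ | ⟨hxT, hxV⟩)
        · exact ⟨hxK, fun hx => hxT (hV2fT hx)⟩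
        · exact ⟨hK1 hxT, hxV⟩
    have hdis : Disjoint (K \ T) (T \ V2f) := by
      rw [disjoint_left]
      intro x hx hx'
      exact (mem_sdiff.mp hx).2 (mem_sdiff.mp hx').1
    have hTV2f_sub : T \ V2f ⊆ V1f := by
      intro x hx
      rw [mem_sdiff, hT, mem_filter, hV2f, mem_filter] at hx
      rw [hV1f, mem_filter]
      refine ⟨mem_univ _, ?_⟩
      rcases fin3_cases (f x) with h0 | h1' | h2'
      · exact absurd h0 hx.1.2.2
      · exact h1'
      · exact absurd (⟨mem_univ x, h2'⟩ : x ∈ univ ∧ f x = 2) hx.2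
    have hCsub : C K ⊆ V1f := by
      intro x hx
      rw [hC] at hx
      simp only [mem_filter, mem_univ, true_and] at hx
      rw [hV1f, mem_filter]
      exact ⟨mem_univ _, hx.1⟩
    have hdis2 : Disjoint (C K) (T \ V2f) := by
      rw [disjoint_left]
      intro x hx hx'
      rw [hC] at hx
      simp only [mem_filter, mem_univ, true_and] at hx
      rw [mem_sdiff, hT, mem_filter] at hx'
      exact hx.2.1 hx'.1.2.1
    calc (K \ V2f).card = (K \ T).card + (T \ V2f).card := by
          rw [hdecomp, card_union_of_disjoint hdis]
      _ ≤ (C K).card + (T \ V2f).card := by omega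
      _ = (C K ∪ (T \ V2f)).card := (card_union_of_disjoint hdis2).symm
      _ ≤ V1f.card := card_le_card (union_subset hCsub hTV2f_sub)
  · -- no violators
    intro v hv1 hvK
    have hvh : h v ≠ 2 := by
      intro hh
      exact hvK (hK1 (by rw [hT, mem_filter]; exact ⟨mem_univ _, hh, by rw [hv1]; decide⟩))
    exact hK4 v hv1 hvh


theorem stmt11 {V : Type*} [Fintype V] [DecidableEq V] (G : SimpleGraph V)
    (f : V → Fin 3)
    (hex : ∃ h : V → Fin 3, Minimal (IsPRDF G) h ∧ f ≤ h) :
    ∃ g : V → Fin 3, Minimal (IsPRDF G) g ∧ f ≤ g ∧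
      ((Finset.univ.filter (fun v => g v = 2)) \
        (Finset.univ.filter (fun v => f v = 2))).card ≤
        (Finset.univ.filter (fun v => f v = 1)).card ∧
      (Finset.univ.filter (fun v => g v = 2)).card ≤ weight f := by
  classical
  obtain ⟨h, hm, hfh⟩ := hex
  haveI : DecidableRel G.Adj := fun a b => Classical.propDecidable _
  obtain ⟨K, hK1, hK2, hK3, hK4⟩ := exists_K hm hfh
  set g : V → Fin 3 := fun v =>
    if v ∈ K then 2
    else if f v = 0 ∧ (K.filter (fun z => G.Adj v z)).card = 1 then 0
    else 1 with hg
  have hgK2 : ∀ v ∈ K, g v = 2 := by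
    intro v hv
    simp only [hg]
    rw [if_pos hv]
  have hg1 : ∀ v, v ∉ K → f v ≠ 0 → g v = 1 := by
    intro v hv hne
    simp only [hg]
    rw [if_neg hv, if_neg (fun hc => hne hc.1)]
  have hgK : ∀ v, g v = 2 ↔ v ∈ K := by
    intro v
    by_cases hv : v ∈ K
    · exact iff_of_true (hgK2 v hv) hv
    · refine iff_of_false ?_ hv
      simp only [hg]
      rw [if_neg hv]
      split_ifs with hc
      · exact (by decide : (0:Fin 3) ≠ 2)
      · exact (by decide : (1:Fin 3) ≠ 2)
  have hg0 : ∀ v, g v = 0 ↔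
      (v ∉ K ∧ (f v = 0 ∧ (K.filter (fun z => G.Adj v z)).card = 1)) := by
    intro v
    by_cases hv : v ∈ K
    · rw [hgK2 v hv]
      exact iff_of_false (by decide) (fun hc => hc.1 hv)
    · simp only [hg]
      rw [if_neg hv]
      split_ifs with hc
      · exact iff_of_true rfl ⟨hv, hc⟩
      · exact iff_of_false (by decide) (fun hx => hc hx.2)
  have hfK : ∀ v, f v = 2 → v ∈ K := by
    intro v hv2
    apply hK1
    rw [Finset.mem_filter]
    exact ⟨Finset.mem_univ _, fin3_two_le hv2 (hfh v),
      fun hh => by rw [hv2] at hh; exact absurd hh (by decide)⟩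
  have hfg : f ≤ g := by
    intro v
    rcases fin3_cases (f v) with h0 | h1 | h2
    · rw [h0]; exact Fin.zero_le _
    · by_cases hv : v ∈ K
      · rw [h1, hgK2 v hv]
        exact (by decide : (1:Fin 3) ≤ 2)
      · have hne0 : f v ≠ 0 := by rw [h1]; exact (by decide : (1:Fin 3) ≠ 0)
        rw [h1, hg1 v hv hne0]
    · rw [h2, hgK2 v (hfK v h2)]
  have hgPRDF : IsPRDF G g := by
    intro v hv0
    obtain ⟨hvK, hf0, hcount⟩ := (hg0 v).mp hv0
    obtain ⟨u, hu⟩ := Finset.card_eq_one.mp hcount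
    have hum : u ∈ K ∧ G.Adj v u := by
      have : u ∈ K.filter (fun z => G.Adj v z) := by
        rw [hu]; exact Finset.mem_singleton_self u
      exact Finset.mem_filter.mp this
    refine ⟨u, ⟨hum.2, (hgK u).mpr hum.1⟩, ?_⟩
    rintro y ⟨hy1, hy2⟩
    have hyK : y ∈ K := (hgK y).mp hy2
    have : y ∈ K.filter (fun z => G.Adj v z) := Finset.mem_filter.mpr ⟨hyK, hy1⟩
    rw [hu] at this
    exact Finset.mem_singleton.mp this
  have hgmin : Minimal (IsPRDF G) g := by
    refine ⟨hgPRDF, ?_⟩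
    intro q hq hql
    have hc1 : ∀ u ∈ K, q u = 2 := by
      intro u huK
      have hu2 : h u = 2 := hK2 u huK
      obtain ⟨w, hadj, hw0⟩ := prdf_min_two hm hu2
      have hfw : f w = 0 := fin3_le_zero (hw0 ▸ hfh w)
      have huniq : ∀ z, G.Adj w z → h z = 2 → z = u := by
        obtain ⟨z', hz', hz'u⟩ := hm.prop w hw0
        have hu' : u = z' := hz'u u ⟨G.adj_symm hadj, hu2⟩
        intro z az hz2
        exact (hz'u z ⟨az, hz2⟩).trans hu'.symm
      have hwcount : K.filter (fun z => G.Adj w z) = {u} := by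
        ext z
        simp only [Finset.mem_filter, Finset.mem_singleton]
        constructor
        · rintro ⟨hzK, hzadj⟩; exact huniq z hzadj (hK2 z hzK)
        · rintro rfl; exact ⟨huK, G.adj_symm hadj⟩
      have hwK : w ∉ K := by
        intro hw
        rw [hK2 w hw] at hw0
        exact absurd hw0 (by decide)
      have hgw : g w = 0 := (hg0 w).mpr ⟨hwK, hfw, by rw [hwcount]; rfl⟩
      have hqw : q w = 0 := fin3_le_zero (hgw ▸ hql w)
      obtain ⟨z, ⟨hzadj, hz2⟩, _⟩ := hq w hqw
      have hzK : z ∈ K := (hgK z).mp (fin3_two_le hz2 (hql z))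
      have hzu : z = u := huniq z hzadj (hK2 z hzK)
      rw [← hzu]
      exact hz2
    intro v
    rcases fin3_cases (g v) with hgv | hgv | hgv
    · rw [hgv]; exact Fin.zero_le _
    · rcases fin3_cases (q v) with hqv | hqv | hqv
      · exfalso
        obtain ⟨z, ⟨hzadj, hz2⟩, huq⟩ := hq v hqv
        have hzK : z ∈ K := (hgK z).mp (fin3_two_le hz2 (hql z))
        have hvnK : v ∉ K := by
          intro hv
          rw [(hgK v).mpr hv] at hgv
          exact absurd hgv (by decide)
        have hcnt : K.filter (fun z => G.Adj v z) = {z} := by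
          ext y
          simp only [Finset.mem_filter, Finset.mem_singleton]
          constructor
          · rintro ⟨hyK, hyadj⟩; exact huq y ⟨hyadj, hc1 y hyK⟩
          · rintro rfl; exact ⟨hzK, hzadj⟩
        have hcnt1 : (K.filter (fun z => G.Adj v z)).card = 1 := by rw [hcnt]; rfl
        have hnc : ¬ (f v = 0 ∧ (K.filter (fun z => G.Adj v z)).card = 1) := by
          intro hc
          have : g v = 0 := (hg0 v).mpr ⟨hvnK, hc⟩
          rw [this] at hgv
          exact absurd hgv (by decide)
        rcases fin3_cases (f v) with h0 | h1 | h2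
        · exact hnc ⟨h0, hcnt1⟩
        · exact hK4 v h1 hvnK hcnt1
        · exact hvnK (hfK v h2)
      · rw [hgv, hqv]
      · rw [hgv, hqv]; exact (by decide : (1:Fin 3) ≤ 2)
    · rw [hgv, hc1 v ((hgK v).mp hgv)]
  have hgfilter : Finset.univ.filter (fun v => g v = 2) = K := by
    ext v
    simp only [Finset.mem_filter, Finset.mem_univ, true_and]
    exact hgK v
  have hV2fK : Finset.univ.filter (fun v => f v = 2) ⊆ K := by
    intro v hv
    exact hfK v (Finset.mem_filter.mp hv).2
  refine ⟨g, hgmin, hfg, ?_, ?_⟩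
  · rw [hgfilter]
    exact hK3
  · rw [hgfilter]
    have hcards := Finset.card_sdiff_add_card_eq_card hV2fK
    have hwt : (Finset.univ.filter (fun v => f v = 1)).card
        + (Finset.univ.filter (fun v => f v = 2)).card ≤ weight f := by
      have hdisj : Disjoint (Finset.univ.filter (fun v => f v = 1))
          (Finset.univ.filter (fun v => f v = 2)) := by
        rw [Finset.disjoint_left]
        intro x hx hx'
        have h1 := (Finset.mem_filter.mp hx).2
        have h2 := (Finset.mem_filter.mp hx').2
        rw [h1] at h2
        exact absurd h2 (by decide)
      calc (Finset.univ.filter (fun v => f v = 1)).card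
            + (Finset.univ.filter (fun v => f v = 2)).card
          = ((Finset.univ.filter (fun v => f v = 1))
            ∪ (Finset.univ.filter (fun v => f v = 2))).card :=
            (Finset.card_union_of_disjoint hdisj).symm
        _ = ∑ _v ∈ ((Finset.univ.filter (fun v => f v = 1))
            ∪ (Finset.univ.filter (fun v => f v = 2))), 1 := by
            rw [Finset.card_eq_sum_ones]
        _ ≤ ∑ v ∈ ((Finset.univ.filter (fun v => f v = 1))
            ∪ (Finset.univ.filter (fun v => f v = 2))), (f v : ℕ) := by
            apply Finset.sum_le_sum
            intro i hi
            rcases Finset.mem_union.mp hi with hi' | hi'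
            · rw [(Finset.mem_filter.mp hi').2]; decide
            · rw [(Finset.mem_filter.mp hi').2]; decide
        _ ≤ ∑ v, (f v : ℕ) :=
            Finset.sum_le_sum_of_subset (Finset.subset_univ _)
        _ = weight f := rfl
    omega
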